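/- arXiv:2201.12408 — 3 statements merged into one kernel-verified Lean document; each statement's English description precedes it below -/
import Mathlib

section
/- Let n > 0 and let p^a_GB, p^a_BG, p^p_GB, p^p_BG ∈ [0,1] satisfy assumptions (3a) p^p_GB ≥ p^a_GB and p^a_BG ≥ p^p_BG, (3b) 1 − p^p_GB > p^p_BG and 1 − p^a_GB > p^a_BG, (3c) p^a_BG − p^p_BG > p^p_GB − p^a_GB, together with p^p_GB + p^p_BG > 0. Let P(s) = s(1 − p^p_GB) + (n − s)p^p_BG be the passive step and, for w ∈ [0,1], let f_w(s) = s(1 − (w p^a_GB + (1−w)p^p_GB)) + (n − s)(w p^a_BG + (1−w)p^p_BG) be the mixed step. Fix an integer period τ ≥ 1 and let g_w = P^{(τ−1)} ∘ f_w (the mixed step followed by τ−1 passive steps). Then g_w is an affine map of [0,n] into itself with slope in (0,1); it has a unique fixed point q*(w,τ) ∈ [0,n]; and both q*(w,τ) ≥ s_∞ and f_w(q*(w,τ)) ≥ s_∞, where s_∞ = n·p^p_BG/(p^p_GB + p^p_BG). -/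
set_option maxHeartbeats 1000000 in
/-- The period-`τ` composite map `g_w = P^{(τ−1)} ∘ f_w` (one mixed step
followed by `τ−1` passive steps) is an affine self-map of `[0,n]` with
slope in `(0,1)`, has a unique fixed point `q* ∈ [0,n]`, and both `q*`
and `f_w(q*)` dominate the passive steady state `s_∞`. -/
theorem stmt_7 (n paGB paBG ppGB ppBG w : ℝ)
    (hn : 0 < n)
    (hpaGB : paGB ∈ Set.Icc (0:ℝ) 1) (hpaBG : paBG ∈ Set.Icc (0:ℝ) 1)
    (hppGB : ppGB ∈ Set.Icc (0:ℝ) 1) (hppBG : ppBG ∈ Set.Icc (0:ℝ) 1)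
    (h3a₁ : ppGB ≥ paGB) (h3a₂ : paBG ≥ ppBG)
    (h3b₁ : 1 - ppGB > ppBG) (h3b₂ : 1 - paGB > paBG)
    (h3c : paBG - ppBG > ppGB - paGB)
    (hsum : 0 < ppGB + ppBG)
    (hw : w ∈ Set.Icc (0:ℝ) 1)
    (P f : ℝ → ℝ)
    (hP : ∀ s : ℝ, P s = s * (1 - ppGB) + (n - s) * ppBG)
    (hf : ∀ s : ℝ, f s = s * (1 - (w * paGB + (1 - w) * ppGB)) +
      (n - s) * (w * paBG + (1 - w) * ppBG))
    (τ : ℕ) (hτ : 1 ≤ τ)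
    (g : ℝ → ℝ) (hg : g = P^[τ - 1] ∘ f)
    (sInf : ℝ) (hsInf : sInf = n * ppBG / (ppGB + ppBG)) :
    (∃ α β : ℝ, α ∈ Set.Ioo (0:ℝ) 1 ∧ ∀ s : ℝ, g s = α * s + β) ∧
    Set.MapsTo g (Set.Icc 0 n) (Set.Icc 0 n) ∧
    (∃! q : ℝ, q ∈ Set.Icc 0 n ∧ g q = q) ∧
    (∀ q ∈ Set.Icc (0:ℝ) n, g q = q → sInf ≤ q ∧ sInf ≤ f q) := by
  obtain ⟨ha0, ha1⟩ := hpaGB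
  obtain ⟨hb0, hb1⟩ := hpaBG
  obtain ⟨hc0, hc1⟩ := hppGB
  obtain ⟨hd0, hd1⟩ := hppBG
  obtain ⟨hw0, hw1⟩ := hw
  have hsum' : ppGB + ppBG ≠ 0 := ne_of_gt hsum
  set k : ℕ := τ - 1 with hk
  set αP : ℝ := 1 - ppGB - ppBG with hαP
  set αf : ℝ := 1 - (w * paGB + (1 - w) * ppGB) - (w * paBG + (1 - w) * ppBG) with hαf
  have hαP0 : 0 < αP := by simp only [hαP]; linarith
  have hαP1 : αP < 1 := by simp only [hαP]; linarith
  have key : ∀ a b : ℝ, 0 < a → 0 < b → 0 < w * a + (1 - w) * b := by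
    intro a b ha hb
    rcases le_total a b with h | h
    · nlinarith [mul_nonneg hw0 (sub_nonneg.mpr h)]
    · nlinarith [mul_nonneg (sub_nonneg.mpr hw1) (sub_nonneg.mpr h)]
  have hαf0 : 0 < αf := by
    have := key (1 - paGB - paBG) (1 - ppGB - ppBG) (by linarith) (by linarith)
    simp only [hαf]; linarith
  have hαf1 : αf < 1 := by
    have := key (paGB + paBG) (ppGB + ppBG) (by linarith) hsum
    simp only [hαf]; linarith
  have hαPk0 : 0 < αP ^ k := pow_pos hαP0 k
  have hαPk1 : αP ^ k ≤ 1 := pow_le_one₀ hαP0.le hαP1.le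
  have hsInf0 : 0 ≤ sInf := by rw [hsInf]; positivity
  have hsInfn : sInf ≤ n := by rw [hsInf, div_le_iff₀ hsum]; nlinarith
  have hPfix : ∀ s : ℝ, P s = sInf + αP * (s - sInf) := by
    intro s
    rw [hP, hsInf]
    field_simp
    ring
  have hPk : ∀ s : ℝ, P^[k] s = sInf + αP ^ k * (s - sInf) := by
    induction k with
    | zero => intro s; simp
    | succ m ih =>
      intro s
      rw [Function.iterate_succ_apply', ih s, hPfix]
      ring
  have hgf : ∀ s : ℝ, g s = sInf + αP ^ k * (f s - sInf) := by
    intro s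
    rw [hg]
    exact hPk (f s)
  have hfaff : ∀ s t : ℝ, f s - f t = αf * (s - t) := by
    intro s t; rw [hf, hf]; simp only [hαf]; ring
  have hc0' : 0 ≤ f sInf - sInf := by
    have hfx : P sInf = sInf := by rw [hPfix]; ring
    have hdef : f sInf - sInf
        = w * (sInf * (ppGB - paGB) + (n - sInf) * (paBG - ppBG)) := by
      have h : f sInf - P sInf
          = w * (sInf * (ppGB - paGB) + (n - sInf) * (paBG - ppBG)) := by
        rw [hf, hP]; ring
      rw [hfx] at h; exact h
    rw [hdef]
    have h1 : 0 ≤ sInf * (ppGB - paGB) := mul_nonneg hsInf0 (by linarith)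
    have h2 : 0 ≤ (n - sInf) * (paBG - ppBG) := mul_nonneg (by linarith) (by linarith)
    exact mul_nonneg hw0 (by linarith)
  set α : ℝ := αP ^ k * αf with hα
  have hα0 : 0 < α := mul_pos hαPk0 hαf0
  have hα1 : α < 1 := by
    have : αP ^ k * αf ≤ 1 * αf := mul_le_mul_of_nonneg_right hαPk1 hαf0.le
    simp only [hα]; linarith
  set β : ℝ := sInf + αP ^ k * (f 0 - sInf) with hβ
  have hgaff : ∀ s : ℝ, g s = α * s + β := by
    intro s
    have h1 := hgf s
    have h2 : f s = f 0 + αf * s := by have := hfaff s 0; linarith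
    rw [h1, h2, hα, hβ]; ring
  have hmaps : Set.MapsTo g (Set.Icc 0 n) (Set.Icc 0 n) := by
    intro s hs
    obtain ⟨hs0, hsn⟩ := hs
    have hf0 : 0 ≤ f s := by
      rw [hf]
      have h1 : 0 ≤ s * (1 - (w * paGB + (1 - w) * ppGB)) := by
        apply mul_nonneg hs0; nlinarith
      have h2 : 0 ≤ (n - s) * (w * paBG + (1 - w) * ppBG) := by
        apply mul_nonneg (by linarith); nlinarith
      linarith
    have hfn : f s ≤ n := by
      rw [hf]
      nlinarith [mul_nonneg hs0 (by nlinarith : (0:ℝ) ≤ w * paGB + (1 - w) * ppGB),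
        mul_nonneg (by linarith : (0:ℝ) ≤ n - s)
          (by nlinarith : (0:ℝ) ≤ 1 - (w * paBG + (1 - w) * ppBG))]
    rw [Set.mem_Icc, hgf s]
    constructor
    · nlinarith [mul_nonneg hαPk0.le hf0,
        mul_nonneg (by linarith : (0:ℝ) ≤ 1 - αP ^ k) hsInf0]
    · nlinarith [mul_nonneg hαPk0.le (by linarith : (0:ℝ) ≤ n - f s),
        mul_nonneg (by linarith : (0:ℝ) ≤ 1 - αP ^ k) (by linarith : (0:ℝ) ≤ n - sInf)]
  refine ⟨⟨α, β, ⟨hα0, hα1⟩, hgaff⟩, hmaps, ?_, ?_⟩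
  · have h1α : (0:ℝ) < 1 - α := by linarith
    have hβ0 : 0 ≤ β := by
      have h := (hmaps ⟨le_refl 0, hn.le⟩).1
      rw [hgaff 0] at h; linarith
    have hβn : α * n + β ≤ n := by
      have h := (hmaps ⟨hn.le, le_refl n⟩).2
      rw [hgaff n] at h; linarith
    refine ⟨β / (1 - α), ⟨⟨div_nonneg hβ0 h1α.le, ?_⟩, ?_⟩, ?_⟩
    · rw [div_le_iff₀ h1α]; nlinarith
    · rw [hgaff]; field_simp; ring
    · rintro q ⟨hq, hgq⟩
      rw [hgaff q] at hgq
      rw [eq_div_iff (ne_of_gt h1α)]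
      nlinarith [hgq]
  · intro q hq hgq
    have h1 : q - sInf = αP ^ k * (f q - sInf) := by
      have := hgf q; rw [hgq] at this; linarith
    have h3 : f q - sInf = αf * (q - sInf) + (f sInf - sInf) := by
      linarith [hfaff q sInf]
    rw [h3] at h1
    have hq2 : (1 - α) * (q - sInf) = αP ^ k * (f sInf - sInf) := by
      simp only [hα]; linear_combination h1
    have hrhs : 0 ≤ αP ^ k * (f sInf - sInf) := mul_nonneg hαPk0.le hc0'
    have h4 : 0 ≤ (1 - α) * (q - sInf) := by rw [hq2]; exact hrhs
    have hq3 : 0 ≤ q - sInf := by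
      by_contra hlt
      push_neg at hlt
      nlinarith [mul_pos (show (0:ℝ) < 1 - α by linarith)
        (show (0:ℝ) < sInf - q by linarith)]
    exact ⟨by linarith, by nlinarith [mul_nonneg hαf0.le hq3]⟩
end

section
/- Under the hypotheses of the previous setup — n > 0, probabilities p^a_GB, p^a_BG, p^p_GB, p^p_BG ∈ [0,1] satisfying assumptions (3a), (3b), (3c) and p^p_GB + p^p_BG > 0, passive step P(s) = s(1 − p^p_GB) + (n − s)p^p_BG, mixed step f_w, period τ ≥ 1, and q*(w,τ) the unique fixed point in [0,n] of P^{(τ−1)} ∘ f_w — the steady-state pre-pull good count is monotone in the exposure: for all 0 ≤ w₁ ≤ w₂ ≤ 1, q*(w₁,τ) ≤ q*(w₂,τ). -/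
/-- Monotonicity of the steady-state pre-pull good count in the exposure:
if `q₁`, `q₂` are the fixed points in `[0,n]` of `P^{(τ−1)} ∘ f_{w₁}` and
`P^{(τ−1)} ∘ f_{w₂}` with `w₁ ≤ w₂`, then `q₁ ≤ q₂`. -/
theorem stmt_8 (n paGB paBG ppGB ppBG : ℝ)
    (hn : 0 < n)
    (hpaGB : paGB ∈ Set.Icc (0:ℝ) 1) (hpaBG : paBG ∈ Set.Icc (0:ℝ) 1)
    (hppGB : ppGB ∈ Set.Icc (0:ℝ) 1) (hppBG : ppBG ∈ Set.Icc (0:ℝ) 1)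
    (h3a₁ : ppGB ≥ paGB) (h3a₂ : paBG ≥ ppBG)
    (h3b₁ : 1 - ppGB > ppBG) (h3b₂ : 1 - paGB > paBG)
    (h3c : paBG - ppBG > ppGB - paGB)
    (hsum : 0 < ppGB + ppBG)
    (P : ℝ → ℝ)
    (hP : ∀ s : ℝ, P s = s * (1 - ppGB) + (n - s) * ppBG)
    (f : ℝ → ℝ → ℝ)
    (hf : ∀ w s : ℝ, f w s = s * (1 - (w * paGB + (1 - w) * ppGB)) +
      (n - s) * (w * paBG + (1 - w) * ppBG))
    (τ : ℕ) (hτ : 1 ≤ τ)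
    (w₁ w₂ : ℝ) (hw₁ : 0 ≤ w₁) (hw₁₂ : w₁ ≤ w₂) (hw₂ : w₂ ≤ 1)
    (q₁ q₂ : ℝ) (hq₁ : q₁ ∈ Set.Icc (0:ℝ) n) (hq₂ : q₂ ∈ Set.Icc (0:ℝ) n)
    (hfix₁ : P^[τ - 1] (f w₁ q₁) = q₁)
    (hfix₂ : P^[τ - 1] (f w₂ q₂) = q₂) :
    q₁ ≤ q₂ := by
  set cp : ℝ := 1 - ppGB - ppBG with hcp
  -- iterates of P are affine with slope cp^k
  have hPdiff : ∀ (k : ℕ) (x y : ℝ), P^[k] x - P^[k] y = cp ^ k * (x - y) := by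
    intro k
    induction k with
    | zero => intro x y; simp
    | succ k ih =>
      intro x y
      rw [Function.iterate_succ_apply', Function.iterate_succ_apply', hP, hP]
      rw [pow_succ]
      linear_combination (1 - ppGB - ppBG) * ih x y
  have hcp0 : 0 ≤ cp := by
    obtain ⟨_, _⟩ := hppBG
    linarith
  have hPmono : ∀ (k : ℕ) (x y : ℝ), x ≤ y → P^[k] x ≤ P^[k] y := by
    intro k x y hxy
    have h := hPdiff k y x
    have : 0 ≤ cp ^ k * (y - x) := mul_nonneg (pow_nonneg hcp0 k) (by linarith)
    linarith
  -- slope of f w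
  have hfdiff : ∀ (w x y : ℝ), f w x - f w y =
      (1 - w * paGB - (1 - w) * ppGB - w * paBG - (1 - w) * ppBG) * (x - y) := by
    intro w x y
    rw [hf, hf]; ring
  -- f is monotone in w on [0,n]
  have hfw : f w₁ q₁ ≤ f w₂ q₁ := by
    rw [hf, hf]
    obtain ⟨hq₁0, hq₁n⟩ := hq₁
    nlinarith [mul_nonneg (mul_nonneg (sub_nonneg.2 hw₁₂) (sub_nonneg.2 h3a₁)) hq₁0,
      mul_nonneg (mul_nonneg (sub_nonneg.2 hw₁₂) (sub_nonneg.2 h3a₂)) (sub_nonneg.2 hq₁n)]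
  -- contraction factor for w₂
  set c₂ : ℝ := 1 - w₂ * paGB - (1 - w₂) * ppGB - w₂ * paBG - (1 - w₂) * ppBG with hc₂
  have hw₂0 : 0 ≤ w₂ := le_trans hw₁ hw₁₂
  have hc₂pos : 0 < c₂ := by
    have h1 : 0 < 1 - paGB - paBG := by linarith
    have h2 : 0 < 1 - ppGB - ppBG := by linarith
    have : c₂ = w₂ * (1 - paGB - paBG) + (1 - w₂) * (1 - ppGB - ppBG) := by
      rw [hc₂]; ring
    rw [this]
    rcases eq_or_lt_of_le hw₂0 with h | h
    · rw [← h]; simpa using h2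
    · nlinarith
  have hc₂lt : c₂ < 1 := by
    have hpa : 0 < paGB + paBG := by linarith
    have : c₂ = 1 - (w₂ * (paGB + paBG) + (1 - w₂) * (ppGB + ppBG)) := by
      rw [hc₂]; ring
    rw [this]
    rcases eq_or_lt_of_le hw₂0 with h | h
    · rw [← h]; simp; linarith
    · nlinarith
  -- main argument
  by_contra hlt
  push_neg at hlt
  have key1 : q₁ ≤ P^[τ - 1] (f w₂ q₁) := by
    calc q₁ = P^[τ - 1] (f w₁ q₁) := hfix₁.symm
    _ ≤ P^[τ - 1] (f w₂ q₁) := hPmono _ _ _ hfw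
  have key2 : P^[τ - 1] (f w₂ q₁) - P^[τ - 1] (f w₂ q₂) =
      cp ^ (τ - 1) * (c₂ * (q₁ - q₂)) := by
    rw [hPdiff, hfdiff]
  have hcpk : cp ^ (τ - 1) ≤ 1 := pow_le_one₀ hcp0 (by linarith [hppGB.1, hppBG.1])
  have hcont : cp ^ (τ - 1) * (c₂ * (q₁ - q₂)) < q₁ - q₂ := by
    have h1 : c₂ * (q₁ - q₂) < q₁ - q₂ := by nlinarith
    have h2 : 0 ≤ c₂ * (q₁ - q₂) := mul_nonneg hc₂pos.le (by linarith)
    calc cp ^ (τ - 1) * (c₂ * (q₁ - q₂)) ≤ 1 * (c₂ * (q₁ - q₂)) :=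
          mul_le_mul_of_nonneg_right hcpk h2
    _ = c₂ * (q₁ - q₂) := one_mul _
    _ < q₁ - q₂ := h1
  rw [hfix₂] at key2
  linarith
end

section
/- Let n > 0 and let p^a_GB, p^a_BG, p^p_GB, p^p_BG ∈ [0,1] satisfy assumptions (3a) p^p_GB ≥ p^a_GB and p^a_BG ≥ p^p_BG, (3c) p^a_BG − p^p_BG > p^p_GB − p^a_GB, and p^p_GB + p^p_BG > 0. Write cure = p^a_BG − p^p_BG, prevention = p^p_GB − p^a_GB, p̂_GB(w) = w p^a_GB + (1−w)p^p_GB, p̂_BG(w) = w p^a_BG + (1−w)p^p_BG, and for w ∈ [0,1] let q*(w) = n·p̂_BG(w)/(p̂_GB(w) + p̂_BG(w)) (the unique fixed point of f_w on [0,n]). Then the steady-state per-round reward of pulling every round with exposure w satisfies the identity w·(prevention·q*(w) + cure·(n − q*(w))) = n·(cure·p^p_GB + prevention·p^p_BG)·w / ((p^p_GB + p^p_BG) + (cure − prevention)·w), and this function of w is monotone nondecreasing and concave on [0,1]. -/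
/-!
The denominator of `q*(w)` is affine in `w`, so the reward is a linear-fractional function
`a w / (s + d w)` with `a ≥ 0`, `s > 0` and, by (3c), `d > 0`. Writing it as
`a / d - (a s / d) (s + d w)⁻¹` exhibits it as a constant minus a nonnegative multiple of the
reciprocal of a positive affine function, which is convex.
-/

open Set

lemma convexOn_inv_affine {s d : ℝ} (hs : 0 < s) (hd : 0 ≤ d) :
    ConvexOn ℝ (Ici 0) fun w : ℝ => (s + d * w)⁻¹ := by
  let g : ℝ →ᵃ[ℝ] ℝ := AffineMap.const ℝ ℝ s + d • AffineMap.id ℝ ℝ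
  have hinv : ConvexOn ℝ (Ioi 0) fun x : ℝ => x⁻¹ := by
    simpa using convexOn_zpow (𝕜 := ℝ) (-1)
  refine (hinv.comp_affineMap g).subset (fun w (hw : 0 ≤ w) => ?_) (convex_Ici 0) |>.congr ?_
  · show 0 < s + d * w
    positivity
  · intro w _
    simp [g]

lemma concaveOn_mul_div_affine {a s d : ℝ} (ha : 0 ≤ a) (hs : 0 < s) (hd : 0 < d) :
    ConcaveOn ℝ (Ici 0) fun w : ℝ => a * w / (s + d * w) := by
  have hcoef : 0 ≤ a * s / d := by positivity
  refine ((convexOn_inv_affine hs hd.le).smul hcoef).neg.add_const (a / d) |>.congr fun w hw => ?_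
  have hw : (0 : ℝ) ≤ w := hw
  have : s + d * w ≠ 0 := by positivity
  simp only [Pi.add_apply, Pi.neg_apply, smul_eq_mul]
  field_simp
  ring

lemma monotoneOn_mul_div_affine {a s d : ℝ} (ha : 0 ≤ a) (hs : 0 < s) (hd : 0 ≤ d) :
    MonotoneOn (fun w : ℝ => a * w / (s + d * w)) (Ici 0) := by
  intro x (hx : 0 ≤ x) y (hy : 0 ≤ y) hxy
  dsimp only
  rw [div_le_div_iff₀ (by positivity) (by positivity)]
  nlinarith [mul_nonneg (mul_nonneg ha hs.le) (sub_nonneg.2 hxy)]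

lemma steadyState_reward_eq (n paGB paBG ppGB ppBG w : ℝ)
    (hden : ppGB + ppBG + ((paBG - ppBG) - (ppGB - paGB)) * w ≠ 0) :
    w * ((ppGB - paGB) * (n * (w * paBG + (1 - w) * ppBG) /
      ((w * paGB + (1 - w) * ppGB) + (w * paBG + (1 - w) * ppBG))) + (paBG - ppBG) *
      (n - n * (w * paBG + (1 - w) * ppBG) /
      ((w * paGB + (1 - w) * ppGB) + (w * paBG + (1 - w) * ppBG)))) =
    n * ((paBG - ppBG) * ppGB + (ppGB - paGB) * ppBG) * w /
        ((ppGB + ppBG) + ((paBG - ppBG) - (ppGB - paGB)) * w) := by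
  have hden' : (w * paGB + (1 - w) * ppGB) + (w * paBG + (1 - w) * ppBG) =
      ppGB + ppBG + ((paBG - ppBG) - (ppGB - paGB)) * w := by ring
  have hq := div_mul_cancel₀ (n * (w * paBG + (1 - w) * ppBG)) hden
  rw [hden', eq_div_iff hden]
  linear_combination (w * ((ppGB - paGB) - (paBG - ppBG))) * hq

theorem stmt_9_general (n paGB paBG ppGB ppBG : ℝ)
    (hn : 0 < n)
    (hppGB : ppGB ∈ Set.Icc (0:ℝ) 1) (hppBG : ppBG ∈ Set.Icc (0:ℝ) 1)
    (h3a₁ : ppGB ≥ paGB) (h3a₂ : paBG ≥ ppBG)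
    (h3c : paBG - ppBG > ppGB - paGB)
    (hsum : 0 < ppGB + ppBG)
    (q R : ℝ → ℝ)
    (hq : ∀ w : ℝ, q w = n * (w * paBG + (1 - w) * ppBG) /
      ((w * paGB + (1 - w) * ppGB) + (w * paBG + (1 - w) * ppBG)))
    (hR : ∀ w : ℝ, R w = w * ((ppGB - paGB) * q w + (paBG - ppBG) * (n - q w))) :
    (∀ w ∈ Set.Icc (0:ℝ) 1,
      R w = n * ((paBG - ppBG) * ppGB + (ppGB - paGB) * ppBG) * w /
        ((ppGB + ppBG) + ((paBG - ppBG) - (ppGB - paGB)) * w)) ∧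
    MonotoneOn R (Set.Icc (0:ℝ) 1) ∧
    ConcaveOn ℝ (Set.Icc (0:ℝ) 1) R := by
  have hd : 0 < (paBG - ppBG) - (ppGB - paGB) := sub_pos.2 h3c
  have hC : 0 ≤ n * ((paBG - ppBG) * ppGB + (ppGB - paGB) * ppBG) := by
    have hcure : 0 ≤ paBG - ppBG := sub_nonneg.2 h3a₂
    have hprevention : 0 ≤ ppGB - paGB := sub_nonneg.2 h3a₁
    have := hppGB.1
    have := hppBG.1
    positivity
  have hR_eq : EqOn (fun w => n * ((paBG - ppBG) * ppGB + (ppGB - paGB) * ppBG) * w /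
      ((ppGB + ppBG) + ((paBG - ppBG) - (ppGB - paGB)) * w)) R (Icc 0 1) := fun w hw => by
    rw [hR, hq, steadyState_reward_eq]
    exact (add_pos_of_pos_of_nonneg hsum (mul_nonneg hd.le hw.1)).ne'
  have hsub : Icc (0 : ℝ) 1 ⊆ Ici 0 := Icc_subset_Ici_self
  refine ⟨fun w hw => (hR_eq hw).symm, ?_, ?_⟩
  · exact ((monotoneOn_mul_div_affine hC hsum hd.le).mono hsub).congr hR_eq
  · exact ((concaveOn_mul_div_affine hC hsum hd).subset hsub (convex_Icc 0 1)).congr hR_eq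

/-- Steady-state instance (period 1) of Theorem 2: the steady-state
per-round reward `w·(prevention·q*(w) + cure·(n − q*(w)))` equals
`n(cure·p^p_GB + prevention·p^p_BG)·w / ((p^p_GB + p^p_BG) + (cure − prevention)w)`,
and this function of `w` is monotone nondecreasing and concave on `[0,1]`. -/
theorem stmt_9 (n paGB paBG ppGB ppBG : ℝ)
    (hn : 0 < n)
    (hpaGB : paGB ∈ Set.Icc (0:ℝ) 1) (hpaBG : paBG ∈ Set.Icc (0:ℝ) 1)
    (hppGB : ppGB ∈ Set.Icc (0:ℝ) 1) (hppBG : ppBG ∈ Set.Icc (0:ℝ) 1)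
    (h3a₁ : ppGB ≥ paGB) (h3a₂ : paBG ≥ ppBG)
    (h3c : paBG - ppBG > ppGB - paGB)
    (hsum : 0 < ppGB + ppBG)
    (q R : ℝ → ℝ)
    (hq : ∀ w : ℝ, q w = n * (w * paBG + (1 - w) * ppBG) /
      ((w * paGB + (1 - w) * ppGB) + (w * paBG + (1 - w) * ppBG)))
    (hR : ∀ w : ℝ, R w = w * ((ppGB - paGB) * q w + (paBG - ppBG) * (n - q w))) :
    (∀ w ∈ Set.Icc (0:ℝ) 1,
      R w = n * ((paBG - ppBG) * ppGB + (ppGB - paGB) * ppBG) * w /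
        ((ppGB + ppBG) + ((paBG - ppBG) - (ppGB - paGB)) * w)) ∧
    MonotoneOn R (Set.Icc (0:ℝ) 1) ∧
    ConcaveOn ℝ (Set.Icc (0:ℝ) 1) R :=
  stmt_9_general n paGB paBG ppGB ppBG hn hppGB hppBG h3a₁ h3a₂ h3c hsum q R hq hR
end
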